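/- arXiv:1408.0807 — 6 statements merged into one kernel-verified Lean document; each statement's English description precedes it below -/
import Mathlib

section
/- The inequality (∑_{1≤i<j≤n} x_{ij}) + (1 − w)·n² ≥ n/2 is valid for the polytope PM_n; that is, every point (x, w) ∈ PM_n satisfies it. -/
open scoped Classical

/-- Edges of the complete graph on `n` vertices: pairs `(i, j)` with `i < j`. -/
abbrev Edg (n : ℕ) := {p : Fin n × Fin n // p.1 < p.2}

/-- 0/1 real value of a boolean. -/
def bval (b : Bool) : ℝ := if b then 1 else 0

/-- Graph on `n` vertices with edge incidence vector `x`. -/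
def graphOf {n : ℕ} (x : Edg n → Bool) : SimpleGraph (Fin n) :=
  SimpleGraph.fromEdgeSet {s | ∃ e : Edg n, x e = true ∧ s = s(e.1.1, e.1.2)}

/-- `G(x)` has a perfect matching. -/
def hasPM {n : ℕ} (x : Edg n → Bool) : Prop :=
  ∃ M : (graphOf x).Subgraph, M.IsPerfectMatching

/-- The point `(x, w_x)` of the perfect matching polytope `PM_n`. -/
noncomputable def pmPt {n : ℕ} (x : Edg n → Bool) : (Edg n → ℝ) × ℝ :=
  (fun e => bval (x e), if hasPM x then 1 else 0)

/-- The perfect matching polytope `PM_n`. -/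
noncomputable def PMpoly (n : ℕ) : Set ((Edg n → ℝ) × ℝ) :=
  convexHull ℝ (Set.range (pmPt (n := n)))

/-!
A graph on `n` vertices with a perfect matching has at least `n / 2` edges, so every vertex
`(x, 1)` of `PM_n` satisfies the inequality; a vertex `(x, 0)` satisfies it because
`n ^ 2 ≥ n / 2`. The left-hand side is affine in `(x, w)`, so the inequality passes to
the convex hull.
-/

open Finset

theorem SimpleGraph.Subgraph.IsPerfectMatching.card_le_two_mul_card_edgeFinset
    {V : Type*} [Fintype V] {G : SimpleGraph V} {M : G.Subgraph} (hM : M.IsPerfectMatching) :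
    Fintype.card V ≤ 2 * #G.edgeFinset := by
  have hdeg : ∀ v, M.spanningCoe.degree v = 1 := fun v => by
    rw [M.degree_spanningCoe]
    exact (isPerfectMatching_iff_forall_degree.mp hM) v
  calc Fintype.card V = ∑ v, M.spanningCoe.degree v := by simp [hdeg]
    _ = 2 * #M.spanningCoe.edgeFinset := M.spanningCoe.sum_degrees_eq_twice_card_edges
    _ ≤ 2 * #G.edgeFinset := by
      gcongr
      exact M.spanningCoe_le

theorem card_edgeFinset_graphOf_le {n : ℕ} (x : Edg n → Bool) :
    #(graphOf x).edgeFinset ≤ #{e | x e = true} := by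
  refine (card_le_card ?_).trans (card_image_le (f := fun e : Edg n => s(e.1.1, e.1.2)))
  intro s hs
  rw [SimpleGraph.mem_edgeFinset, graphOf, SimpleGraph.edgeSet_fromEdgeSet] at hs
  obtain ⟨⟨e, hxe, rfl⟩, -⟩ := hs
  exact mem_image_of_mem _ (mem_filter.mpr ⟨mem_univ e, hxe⟩)

theorem sum_bval_eq_card {ι : Type*} [Fintype ι] (x : ι → Bool) :
    ∑ i, bval (x i) = #{i | x i = true} := by
  simp [bval, ← sum_boole]

theorem half_le_sum_bval_of_hasPM {n : ℕ} {x : Edg n → Bool} (h : hasPM x) :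
    (n : ℝ) / 2 ≤ ∑ e, bval (x e) := by
  obtain ⟨M, hM⟩ := h
  have hcard : n ≤ 2 * #{e | x e = true} := by
    simpa using hM.card_le_two_mul_card_edgeFinset.trans
      (Nat.mul_le_mul_left 2 (card_edgeFinset_graphOf_le x))
  rw [sum_bval_eq_card, div_le_iff₀ two_pos, mul_comm]
  exact_mod_cast hcard

def pmLhs (n : ℕ) (p : (Edg n → ℝ) × ℝ) : ℝ :=
  (∑ e, p.1 e) + (1 - p.2) * (n : ℝ) ^ 2

theorem concaveOn_pmLhs (n : ℕ) : ConcaveOn ℝ Set.univ (pmLhs n) := by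
  refine ⟨convex_univ, fun p _ q _ a b _ _ hab => le_of_eq ?_⟩
  simp only [pmLhs, Prod.fst_add, Prod.snd_add, Prod.smul_fst, Prod.smul_snd, Pi.add_apply,
    Pi.smul_apply, smul_eq_mul, sum_add_distrib, ← mul_sum]
  linear_combination (n : ℝ) ^ 2 * hab

theorem half_le_pmLhs_pmPt {n : ℕ} (x : Edg n → Bool) : (n : ℝ) / 2 ≤ pmLhs n (pmPt x) := by
  by_cases h : hasPM x
  · simpa [pmLhs, pmPt, h] using half_le_sum_bval_of_hasPM h
  · have hsum : 0 ≤ ∑ e, bval (x e) := by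
      rw [sum_bval_eq_card]
      positivity
    have hsq : (n : ℝ) ≤ (n : ℝ) ^ 2 := by exact_mod_cast Nat.le_self_pow two_ne_zero n
    simp only [pmLhs, pmPt, h, if_false, sub_zero, one_mul]
    linarith [(Nat.cast_nonneg n : (0 : ℝ) ≤ n)]

theorem pm_valid_inequality_general (n : ℕ) :
    ∀ p ∈ PMpoly n, (∑ e : Edg n, p.1 e) + (1 - p.2) * (n : ℝ) ^ 2 ≥ (n : ℝ) / 2 := by
  intro p hp
  obtain ⟨_, ⟨x, rfl⟩, hle⟩ :=
    (concaveOn_pmLhs n).exists_le_of_mem_convexHull (Set.subset_univ _) hp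
  exact (half_le_pmLhs_pmPt x).trans hle

theorem pm_valid_inequality (n : ℕ) (hn : Even n) (hpos : 0 < n) :
    ∀ p ∈ PMpoly n, (∑ e : Edg n, p.1 e) + (1 - p.2) * (n : ℝ) ^ 2 ≥ (n : ℝ) / 2 :=
  pm_valid_inequality_general n
end

section
/- The intersection of PM_n with the hyperplane {(x,w) : ∑_{ij} x_{ij} + (1 − w)·n² = n/2} is a face of PM_n whose projection onto the x-coordinates equals EP_n, the convex hull of edge incidence vectors of perfect matchings of the complete graph K_n. -/
open scoped Classical

/-- `x` is the edge incidence vector of a perfect matching of `K_n`: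
every vertex is incident to exactly one chosen edge. -/
def isPMvec {n : ℕ} (x : Edg n → Bool) : Prop :=
  ∀ v : Fin n, ∃! e : Edg n, x e = true ∧ (e.1.1 = v ∨ e.1.2 = v)

/-- Edmonds' perfect matching polytope `EP_n`. -/
noncomputable def EPpoly (n : ℕ) : Set (Edg n → ℝ) :=
  convexHull ℝ {p | ∃ x : Edg n → Bool, isPMvec x ∧ p = fun e => bval (x e)}

/-!
The hyperplane is `ℓ = n² - n/2` for the functional `ℓ(x, w) = n² w - ∑ x`. On a vertex
`(x, w_x)` of `PM_n`, `ℓ` is `n² - |x|` when `G(x)` has a perfect matching and `-|x| ≤ 0`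
otherwise. A perfect matching covers every vertex, so `2 |x| ≥ n`, with equality exactly when
every vertex lies on a single edge of `x`, i.e. when `x` is itself a perfect matching. Hence
`ℓ ≤ n² - n/2` on `PM_n`, and the face it cuts out is the convex hull of the vertices `(x, 1)`
with `x` a perfect matching, whose projection is `EP_n`.
-/

open Finset

theorem isExposed_inter_of_forall_le {𝕜 E : Type*} [TopologicalSpace 𝕜] [Semiring 𝕜]
    [PartialOrder 𝕜] [AddCommMonoid E] [TopologicalSpace E] [Module 𝕜 E] {A : Set E}
    {l : StrongDual 𝕜 E} {c : 𝕜} (h : ∀ x ∈ A, l x ≤ c) :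
    IsExposed 𝕜 A (A ∩ {x | l x = c}) := by
  rintro ⟨q, hqA, hq⟩
  refine ⟨l, Set.ext fun p => ⟨fun ⟨hp, hpc⟩ => ⟨hp, fun y hy => ?_⟩, fun ⟨hp, hmax⟩ => ⟨hp, ?_⟩⟩⟩
  · exact (h y hy).trans_eq hpc.symm
  · exact le_antisymm (h p hp) (hq.symm.trans_le (hmax q hqA))

theorem convexHull_inter_eq_convexHull_inter_of_forall_le {𝕜 E : Type*} [Field 𝕜]
    [LinearOrder 𝕜] [IsStrictOrderedRing 𝕜] [AddCommGroup E] [Module 𝕜 E] {s : Set E} {f : E → 𝕜}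
    (hf : IsLinearMap 𝕜 f) {c : 𝕜} (h : ∀ x ∈ s, f x ≤ c) :
    convexHull 𝕜 s ∩ {x | f x = c} = convexHull 𝕜 (s ∩ {x | f x = c}) := by
  refine subset_antisymm ?_ <| Set.subset_inter (convexHull_mono Set.inter_subset_left) <|
    convexHull_min Set.inter_subset_right (convex_hyperplane hf c)
  -- By linearity, a convex combination with positive weights of points where `f ≤ c` can only
  -- reach `c` if all of them do.
  suffices hull : convexHull 𝕜 s ⊆
      {x | f x ≤ c ∧ (f x = c → x ∈ convexHull 𝕜 (s ∩ {x | f x = c}))} from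
    fun x ⟨hx, hxc⟩ => (hull hx).2 hxc
  refine convexHull_min (fun x hx => ⟨h x hx, fun hxc => subset_convexHull 𝕜 _ ⟨hx, hxc⟩⟩) ?_
  refine convex_iff_forall_pos.2 fun x ⟨hx, hxf⟩ y ⟨hy, hyf⟩ a b ha hb hab => ?_
  simp only [Set.mem_ofPred_eq, hf.map_add, hf.map_smul, smul_eq_mul]
  have hax := mul_le_mul_of_nonneg_left hx ha.le
  have hby := mul_le_mul_of_nonneg_left hy hb.le
  have hc : a * c + b * c = c := by rw [← add_mul, hab, one_mul]
  refine ⟨by linarith, fun heq => ?_⟩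
  have hxc : f x = c := le_antisymm hx (le_of_mul_le_mul_left (by linarith) ha)
  have hyc : f y = c := le_antisymm hy (le_of_mul_le_mul_left (by linarith) hb)
  exact convex_convexHull 𝕜 _ (hxf hxc) (hyf hyc) ha.le hb.le hab

section Counting

variable {n : ℕ} (x : Edg n → Bool)

def chosenEdges : Finset (Edg n) := {e | x e = true}

def chosenEdgesAt (v : Fin n) : Finset (Edg n) := {e ∈ chosenEdges x | e.1.1 = v ∨ e.1.2 = v}

@[simp]
theorem mem_chosenEdgesAt {v : Fin n} {e : Edg n} :
    e ∈ chosenEdgesAt x v ↔ x e = true ∧ (e.1.1 = v ∨ e.1.2 = v) := by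
  simp [chosenEdgesAt, chosenEdges]

theorem sum_bval_eq_card_chosenEdges : ∑ e, bval (x e) = #(chosenEdges x) := by
  simp only [bval, chosenEdges, sum_boole]

theorem card_endpoints (e : Edg n) : #{v | e.1.1 = v ∨ e.1.2 = v} = 2 := by
  rw [show ({v | e.1.1 = v ∨ e.1.2 = v} : Finset (Fin n)) = {e.1.1, e.1.2} by ext; simp [eq_comm]]
  exact card_pair e.2.ne

theorem sum_card_chosenEdgesAt : ∑ v, #(chosenEdgesAt x v) = 2 * #(chosenEdges x) := by
  rw [mul_comm, ← smul_eq_mul, ← sum_const]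
  exact (sum_card_bipartiteAbove_eq_sum_card_bipartiteBelow (s := univ) (t := chosenEdges x) _
    ).trans (sum_congr rfl fun e _ => card_endpoints e)

theorem isPMvec_iff_forall_card_chosenEdgesAt : isPMvec x ↔ ∀ v, #(chosenEdgesAt x v) = 1 := by
  simp [isPMvec, card_eq_one_iff_existsUnique]

theorem graphOf_adj {a b : Fin n} :
    (graphOf x).Adj a b ↔ ∃ e : Edg n, x e = true ∧ s(a, b) = s(e.1.1, e.1.2) := by
  rw [graphOf, SimpleGraph.fromEdgeSet_adj, Set.mem_ofPred_eq, and_iff_left_iff_imp]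
  rintro ⟨e, -, he⟩ rfl
  exact e.2.ne <| Sym2.mk_isDiag_iff.1 <| he ▸ Sym2.mk_isDiag_iff.2 rfl

theorem mem_chosenEdgesAt_of_eq {e : Edg n} (he : x e = true) {a b : Fin n}
    (hab : s(a, b) = s(e.1.1, e.1.2)) : e ∈ chosenEdgesAt x a := by
  have ha : a ∈ s(e.1.1, e.1.2) := hab ▸ Sym2.mem_mk_left a b
  rw [Sym2.mem_iff] at ha
  exact (mem_chosenEdgesAt x).2 ⟨he, ha.imp Eq.symm Eq.symm⟩

variable {x}

theorem hasPM.chosenEdgesAt_nonempty (h : hasPM x) (v : Fin n) :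
    (chosenEdgesAt x v).Nonempty := by
  obtain ⟨M, hM⟩ := h
  obtain ⟨w, hvw, -⟩ := SimpleGraph.Subgraph.isPerfectMatching_iff.1 hM v
  obtain ⟨e, he, hs⟩ := (graphOf_adj x).1 (M.adj_sub hvw)
  exact ⟨e, mem_chosenEdgesAt_of_eq x he hs⟩

theorem isPMvec.hasPM (h : isPMvec x) : hasPM x := by
  refine ⟨⊤, SimpleGraph.Subgraph.isPerfectMatching_iff.2 fun v => ?_⟩
  obtain ⟨e, ⟨he, hv⟩, huniq⟩ := h v
  have hmem : v ∈ s(e.1.1, e.1.2) := by simpa [eq_comm] using hv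
  have hadj : ∀ w, (graphOf x).Adj v w ↔ s(v, w) = s(e.1.1, e.1.2) := fun w => by
    refine (graphOf_adj x).trans ⟨fun ⟨e', he', hs⟩ => ?_, fun hs => ⟨e, he, hs⟩⟩
    rwa [← huniq e' ((mem_chosenEdgesAt x).1 (mem_chosenEdgesAt_of_eq x he' hs))]
  simp only [SimpleGraph.Subgraph.top_adj, hadj]
  exact ⟨Sym2.Mem.other hmem, Sym2.other_spec hmem,
    fun w hw => Sym2.congr_right.1 (hw.trans (Sym2.other_spec hmem).symm)⟩

theorem hasPM.le_two_mul_card_chosenEdges (h : hasPM x) : n ≤ 2 * #(chosenEdges x) := by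
  calc n = ∑ _v : Fin n, 1 := by simp
    _ ≤ ∑ v, #(chosenEdgesAt x v) :=
      sum_le_sum fun v _ => one_le_card.2 (h.chosenEdgesAt_nonempty v)
    _ = 2 * #(chosenEdges x) := sum_card_chosenEdgesAt x

theorem hasPM.two_mul_card_chosenEdges_eq_iff (h : hasPM x) :
    2 * #(chosenEdges x) = n ↔ isPMvec x := by
  rw [← sum_card_chosenEdgesAt, isPMvec_iff_forall_card_chosenEdgesAt]
  have := sum_eq_sum_iff_of_le (s := univ) fun v _ => one_le_card.2 (h.chosenEdgesAt_nonempty v)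
  simpa [eq_comm] using this

end Counting

noncomputable def faceFunctional (n : ℕ) : StrongDual ℝ ((Edg n → ℝ) × ℝ) :=
  (n : ℝ) ^ 2 • ContinuousLinearMap.snd ℝ _ ℝ -
    (∑ e : Edg n, ContinuousLinearMap.proj e).comp (ContinuousLinearMap.fst ℝ _ _)

section FaceFunctional

variable {n : ℕ}

@[simp]
theorem faceFunctional_apply (p : (Edg n → ℝ) × ℝ) :
    faceFunctional n p = (n : ℝ) ^ 2 * p.2 - ∑ e, p.1 e := by
  simp [faceFunctional]

theorem faceFunctional_pmPt (x : Edg n → Bool) :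
    faceFunctional n (pmPt x) = (if hasPM x then (n : ℝ) ^ 2 else 0) - #(chosenEdges x) := by
  simp [pmPt, sum_bval_eq_card_chosenEdges]

theorem faceFunctional_pmPt_le (x : Edg n → Bool) :
    faceFunctional n (pmPt x) ≤ (n : ℝ) ^ 2 - n / 2 := by
  have hn : (n : ℝ) ≤ (n : ℝ) ^ 2 := by exact_mod_cast Nat.le_self_pow two_ne_zero n
  have hcard : (0 : ℝ) ≤ #(chosenEdges x) := by positivity
  rw [faceFunctional_pmPt]
  split_ifs with h
  · have : (n : ℝ) ≤ 2 * #(chosenEdges x) := by exact_mod_cast h.le_two_mul_card_chosenEdges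
    linarith
  · linarith [n.cast_nonneg (α := ℝ)]

theorem faceFunctional_pmPt_eq_iff (hpos : 0 < n) (x : Edg n → Bool) :
    faceFunctional n (pmPt x) = (n : ℝ) ^ 2 - n / 2 ↔ isPMvec x := by
  have hn : (n : ℝ) ≤ (n : ℝ) ^ 2 := by exact_mod_cast Nat.le_self_pow two_ne_zero n
  have hn_pos : (0 : ℝ) < n := by exact_mod_cast hpos
  have hcard : (0 : ℝ) ≤ #(chosenEdges x) := by positivity
  rw [faceFunctional_pmPt]
  split_ifs with h
  · rw [← h.two_mul_card_chosenEdges_eq_iff, ← @Nat.cast_inj ℝ]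
    push_cast
    constructor <;> intro _ <;> linarith
  · exact iff_of_false (by linarith) fun hx => h hx.hasPM

theorem range_pmPt_inter_faceFunctional_eq (hpos : 0 < n) :
    Set.range pmPt ∩ {p | faceFunctional n p = (n : ℝ) ^ 2 - n / 2} = pmPt '' {x | isPMvec x} := by
  ext p
  constructor
  · rintro ⟨⟨x, rfl⟩, hx⟩
    exact ⟨x, (faceFunctional_pmPt_eq_iff hpos x).1 hx, rfl⟩
  · rintro ⟨x, hx, rfl⟩
    exact ⟨⟨x, rfl⟩, (faceFunctional_pmPt_eq_iff hpos x).2 hx⟩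

end FaceFunctional

theorem ep_is_face_of_pm_general (n : ℕ) (hpos : 0 < n) :
    IsExposed ℝ (PMpoly n)
      (PMpoly n ∩ {p | (∑ e : Edg n, p.1 e) + (1 - p.2) * (n : ℝ) ^ 2 = (n : ℝ) / 2}) ∧
    Prod.fst ''
      (PMpoly n ∩ {p | (∑ e : Edg n, p.1 e) + (1 - p.2) * (n : ℝ) ^ 2 = (n : ℝ) / 2})
      = EPpoly n := by
  have hface : {p : (Edg n → ℝ) × ℝ | (∑ e, p.1 e) + (1 - p.2) * (n : ℝ) ^ 2 = n / 2} =
      {p | faceFunctional n p = (n : ℝ) ^ 2 - n / 2} := by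
    ext p
    simp only [Set.mem_ofPred_eq, faceFunctional_apply]
    constructor <;> intro h <;> linarith
  have hvert : ∀ p ∈ Set.range pmPt, faceFunctional n p ≤ (n : ℝ) ^ 2 - n / 2 :=
    Set.forall_mem_range.2 faceFunctional_pmPt_le
  have hlin : IsLinearMap ℝ (faceFunctional n) := ⟨map_add _, map_smul _⟩
  rw [hface]
  refine ⟨isExposed_inter_of_forall_le fun p hp => ?_, ?_⟩
  · exact convexHull_min hvert (convex_halfSpace_le hlin _) hp
  · rw [PMpoly, convexHull_inter_eq_convexHull_inter_of_forall_le hlin hvert,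
      range_pmPt_inter_faceFunctional_eq hpos, ← LinearMap.coe_fst (R := ℝ),
      LinearMap.image_convexHull, Set.image_image, EPpoly]
    congr 1
    ext p
    simp [pmPt, eq_comm]

theorem ep_is_face_of_pm (n : ℕ) (hn : Even n) (hpos : 0 < n) :
    IsExposed ℝ (PMpoly n)
      (PMpoly n ∩ {p | (∑ e : Edg n, p.1 e) + (1 - p.2) * (n : ℝ) ^ 2 = (n : ℝ) / 2}) ∧
    Prod.fst ''
      (PMpoly n ∩ {p | (∑ e : Edg n, p.1 e) + (1 - p.2) * (n : ℝ) ^ 2 = (n : ℝ) / 2})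
      = EPpoly n :=
  ep_is_face_of_pm_general n hpos
end

section
/- Let x̄ ∈ {0,1}^{C(n,2)} be the edge vector of a graph G(x̄) and let m = 1ᵀx̄. Define c ∈ ℝ^{C(n,2)} by c_{ij} = 1 if x̄_{ij} = 1 and c_{ij} = −1 otherwise, and fix 0 < d ≤ 1/2. Then the maximum of cᵀx + d·w over (x,w) ∈ PM_n equals m + d if G(x̄) has a perfect matching, and equals m otherwise; in both cases the maximizer is unique (namely (x̄, w_{x̄})). -/
open scoped Classical

/-!
The objective `cᵀx + d·w` is linear, so over the convex hull `PM_n` it is maximised at a vertex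
`(x, w_x)`, and a point of the hull where it attains the value at the vertex `(x̄, w_x̄)` must be
that vertex as soon as every other vertex scores strictly less. At a vertex the linear part equals
`m` minus the Hamming distance from `x` to `x̄`, so every `x ≠ x̄` loses at least `1`, which the
bonus `d·w_x ≤ d < 1` cannot recover.
-/

open Set in
theorem ConvexOn.eq_of_mem_convexHull_of_apply_le {𝕜 E : Type*} [Field 𝕜] [LinearOrder 𝕜]
    [IsStrictOrderedRing 𝕜] [AddCommGroup E] [Module 𝕜 E] {s : Set E} {f : E → 𝕜} {a p : E}
    (hf : ConvexOn 𝕜 (convexHull 𝕜 s) f) (ha : a ∈ s) (hlt : ∀ y ∈ s, y ≠ a → f y < f a)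
    (hp : p ∈ convexHull 𝕜 s) (hfp : f a ≤ f p) : p = a := by
  rcases (s \ {a}).eq_empty_or_nonempty with hs | hs
  · simpa using convexHull_mono (sdiff_eq_empty.mp hs) hp
  replace hp := convexHull_mono (subset_insert_sdiff_singleton a s) hp
  rw [convexHull_insert hs, convexJoin_singleton_left] at hp
  obtain ⟨q, hq, α, β, hα, hβ, hαβ, rfl⟩ := mem_iUnion₂.mp hp
  have hqs : convexHull 𝕜 (s \ {a}) ⊆ convexHull 𝕜 s := convexHull_mono sdiff_subset
  obtain ⟨y, ⟨hys, hya⟩, hqy⟩ :=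
    (hf.subset hqs (convex_convexHull 𝕜 _)).exists_ge_of_mem_convexHull (subset_convexHull 𝕜 _) hq
  have hfq : f q < f a := hqy.trans_lt (hlt y hys hya)
  rcases hβ.eq_or_lt with rfl | hβ
  · simp [show α = 1 by simpa using hαβ]
  have hfp_lt : f (α • a + β • q) < f a :=
    calc f (α • a + β • q) ≤ α * f a + β * f q :=
          hf.2 (subset_convexHull 𝕜 s ha) (hqs hq) hα hβ.le hαβ
      _ < α * f a + β * f a := by gcongr
      _ = f a := by rw [← add_mul, hαβ, one_mul]
  exact absurd hfp hfp_lt.not_ge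

noncomputable def linearObjective {ι : Type*} [Fintype ι] (c : ι → ℝ) (d : ℝ) :
    ((ι → ℝ) × ℝ) →ₗ[ℝ] ℝ where
  toFun p := (∑ i, c i * p.1 i) + d * p.2
  map_add' p q := by simp only [Prod.fst_add, Prod.snd_add, Pi.add_apply, mul_add,
    Finset.sum_add_distrib]; ring
  map_smul' r p := by simp only [Prod.smul_fst, Prod.smul_snd, Pi.smul_apply, smul_eq_mul,
    RingHom.id_apply, mul_add, Finset.mul_sum, mul_left_comm r]

theorem sign_mul_bval_add_ite_eq (a b : Bool) :
    (if b then 1 else -1) * bval a + (if a = b then 0 else 1) = bval b := by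
  cases a <;> cases b <;> norm_num [bval]

theorem sign_mul_bval_self (b : Bool) : (if b then 1 else -1) * bval b = bval b := by
  cases b <;> norm_num [bval]

theorem sum_sign_mul_bval_add_one_le {ι : Type*} [Fintype ι] {x xbar : ι → Bool} (hne : x ≠ xbar) :
    (∑ i, (if xbar i then 1 else -1) * bval (x i)) + 1 ≤ ∑ i, bval (xbar i) := by
  obtain ⟨i₀, hi₀⟩ := Function.ne_iff.mp hne
  have hmismatch : (1 : ℝ) ≤ ∑ i, if x i = xbar i then 0 else 1 :=
    calc (1 : ℝ) = if x i₀ = xbar i₀ then 0 else 1 := by simp [hi₀]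
      _ ≤ _ := Finset.single_le_sum (f := fun i => if x i = xbar i then (0 : ℝ) else 1)
          (fun i _ => by positivity) (Finset.mem_univ i₀)
  have hsplit : ∑ i, bval (xbar i) =
      (∑ i, (if xbar i then 1 else -1) * bval (x i)) + ∑ i, if x i = xbar i then 0 else 1 := by
    rw [← Finset.sum_add_distrib]
    exact Finset.sum_congr rfl fun i _ => (sign_mul_bval_add_ite_eq (x i) (xbar i)).symm
  linarith

variable {n : ℕ} (xbar : Edg n → Bool)

theorem linearObjective_pmPt_self (d : ℝ) :
    linearObjective (fun e => if xbar e then 1 else -1) d (pmPt xbar) =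
      (∑ e, bval (xbar e)) + if hasPM xbar then d else 0 := by
  change (∑ e, _ * bval (xbar e)) + d * (if hasPM xbar then 1 else 0) = _
  simp only [sign_mul_bval_self]
  split_ifs <;> ring

theorem linearObjective_pmPt_lt {d : ℝ} (hd0 : 0 ≤ d) (hd1 : d < 1) {x : Edg n → Bool}
    (hne : x ≠ xbar) :
    linearObjective (fun e => if xbar e then 1 else -1) d (pmPt x) <
      linearObjective (fun e => if xbar e then 1 else -1) d (pmPt xbar) := by
  rw [linearObjective_pmPt_self]
  change (∑ e, _ * bval (x e)) + d * (if hasPM x then 1 else 0) < _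
  have hbonus : d * (if hasPM x then 1 else 0) ≤ d := by split_ifs <;> linarith
  have hbonus' : 0 ≤ if hasPM xbar then d else 0 := by split_ifs <;> linarith
  linarith [sum_sign_mul_bval_add_one_le hne]

theorem pm_lp_unique_optimum_general (n : ℕ)
    (xbar : Edg n → Bool) (d : ℝ) (hd0 : 0 < d) (hd1 : d ≤ 1 / 2) :
    pmPt xbar ∈ PMpoly n ∧
    (∑ e : Edg n, (if xbar e then (1 : ℝ) else -1) * (pmPt xbar).1 e) + d * (pmPt xbar).2
      = (∑ e : Edg n, bval (xbar e)) + (if hasPM xbar then d else 0) ∧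
    ∀ p ∈ PMpoly n,
      (∑ e : Edg n, (if xbar e then (1 : ℝ) else -1) * p.1 e) + d * p.2
          ≤ (∑ e : Edg n, bval (xbar e)) + (if hasPM xbar then d else 0) ∧
      ((∑ e : Edg n, (if xbar e then (1 : ℝ) else -1) * p.1 e) + d * p.2
          = (∑ e : Edg n, bval (xbar e)) + (if hasPM xbar then d else 0) → p = pmPt xbar) := by
  set f := linearObjective (fun e => if xbar e then 1 else -1) d
  have hf : ConvexOn ℝ (PMpoly n) f := f.convexOn (convex_convexHull ℝ _)
  have hvertex : ∀ y ∈ Set.range (pmPt (n := n)), y ≠ pmPt xbar → f y < f (pmPt xbar) := by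
    rintro _ ⟨x, rfl⟩ hne
    exact linearObjective_pmPt_lt xbar hd0.le (by linarith) (ne_of_apply_ne pmPt hne)
  have hle : ∀ p ∈ PMpoly n, f p ≤ f (pmPt xbar) := fun p hp => by
    obtain ⟨y, hy, hpy⟩ := hf.exists_ge_of_mem_convexHull (subset_convexHull ℝ _) hp
    rcases eq_or_ne y (pmPt xbar) with rfl | hne
    exacts [hpy, hpy.trans (hvertex y hy hne).le]
  have hmem : pmPt xbar ∈ Set.range (pmPt (n := n)) := Set.mem_range_self xbar
  refine ⟨subset_convexHull ℝ _ hmem, linearObjective_pmPt_self xbar d, fun p hp => ?_⟩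
  rw [← linearObjective_pmPt_self xbar d]
  exact ⟨hle p hp, fun hfp => hf.eq_of_mem_convexHull_of_apply_le hmem hvertex hp hfp.ge⟩

theorem pm_lp_unique_optimum (n : ℕ) (hn : Even n) (hpos : 0 < n)
    (xbar : Edg n → Bool) (d : ℝ) (hd0 : 0 < d) (hd1 : d ≤ 1 / 2) :
    pmPt xbar ∈ PMpoly n ∧
    (∑ e : Edg n, (if xbar e then (1 : ℝ) else -1) * (pmPt xbar).1 e) + d * (pmPt xbar).2
      = (∑ e : Edg n, bval (xbar e)) + (if hasPM xbar then d else 0) ∧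
    ∀ p ∈ PMpoly n,
      (∑ e : Edg n, (if xbar e then (1 : ℝ) else -1) * p.1 e) + d * p.2
          ≤ (∑ e : Edg n, bval (xbar e)) + (if hasPM xbar then d else 0) ∧
      ((∑ e : Edg n, (if xbar e then (1 : ℝ) else -1) * p.1 e) + d * p.2
          = (∑ e : Edg n, bval (xbar e)) + (if hasPM xbar then d else 0) → p = pmPt xbar) :=
  pm_lp_unique_optimum_general n xbar d hd0 hd1
end

section
/- (Valiant's circuit-to-polytope construction) Let C be a boolean circuit with q input bits and t gates (each AND or OR, with NOT handled by substitution), and let Q ⊆ [0,1]^{q+t} be the polytope obtained by writing, for each AND gate s = x ∧ y, the inequalities x + y − s ≤ 1, −x + s ≤ 0, −y + s ≤ 0, s ≥ 0, and for each OR gate s = x ∨ y, the inequalities −x − y + s ≤ 0, x − s ≤ 0, y − s ≤ 0, s ≤ 1. Then Q has the x-0/1 property: every 0/1 assignment to the input variables extends uniquely to a point of Q, that extension is 0/1-valued, and its gate-variable values equal the values computed by the circuit. -/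
/-!
At 0/1 inputs `a, b` the four AND inequalities say `max 0 (a + b - 1) ≤ s ≤ min a b`, and the two
bounds coincide, so `s = a ∧ b`; dually the OR inequalities pin `s = a ∨ b`. Negated wires stay
0/1 under `r ↦ 1 - r`. Hence, going through the gates in topological order, every point of the
polytope over a 0/1 input has its gate coordinates forced to the values computed by the circuit,
and that point does satisfy all inequalities.
-/

/-- 0/1 real vector corresponding to a boolean vector. -/
def bvec {q : ℕ} (x : Fin q → Bool) : Fin q → ℝ := fun j => if x j then 1 else 0

/-- A boolean circuit with `q` inputs and `t` gates, each an AND or OR gate,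
whose two inputs are (possibly negated) references to input variables or
earlier gates; NOT gates are handled by the negation flags (substitution). -/
structure BoolCircuit (q t : ℕ) where
  isAnd : Fin t → Bool
  in1 : Fin t → Fin q ⊕ Fin t
  neg1 : Fin t → Bool
  in2 : Fin t → Fin q ⊕ Fin t
  neg2 : Fin t → Bool
  acyc1 : ∀ i j, in1 i = Sum.inr j → (j : ℕ) < (i : ℕ)
  acyc2 : ∀ i j, in2 i = Sum.inr j → (j : ℕ) < (i : ℕ)

/-- Real value of a (possibly negated) wire reference. -/
def rval {q t : ℕ} (x : Fin q → ℝ) (y : Fin t → ℝ) (r : Fin q ⊕ Fin t) (neg : Bool) : ℝ :=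
  if neg then 1 - Sum.elim x y r else Sum.elim x y r

/-- Boolean value of a (possibly negated) wire reference. -/
def lval {q t : ℕ} (x : Fin q → Bool) (y : Fin t → Bool) (r : Fin q ⊕ Fin t) (neg : Bool) :
    Bool :=
  xor (Sum.elim x y r) neg

/-- `y` is the vector of gate values computed by the circuit on input `x`. -/
def evalSpec {q t : ℕ} (C : BoolCircuit q t) (x : Fin q → Bool) (y : Fin t → Bool) : Prop :=
  ∀ i, y i =
    if C.isAnd i then lval x y (C.in1 i) (C.neg1 i) && lval x y (C.in2 i) (C.neg2 i)
    else lval x y (C.in1 i) (C.neg1 i) || lval x y (C.in2 i) (C.neg2 i)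

/-- Valiant's polytope `Q ⊆ [0,1]^{q+t}` built from the circuit: four inequalities
per AND gate and per OR gate. -/
def circuitPolytope {q t : ℕ} (C : BoolCircuit q t) : Set ((Fin q → ℝ) × (Fin t → ℝ)) :=
  {p | (∀ j, 0 ≤ p.1 j ∧ p.1 j ≤ 1) ∧ (∀ i, 0 ≤ p.2 i ∧ p.2 i ≤ 1) ∧
    ∀ i,
      if C.isAnd i then
        rval p.1 p.2 (C.in1 i) (C.neg1 i) + rval p.1 p.2 (C.in2 i) (C.neg2 i) - p.2 i ≤ 1 ∧
        -rval p.1 p.2 (C.in1 i) (C.neg1 i) + p.2 i ≤ 0 ∧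
        -rval p.1 p.2 (C.in2 i) (C.neg2 i) + p.2 i ≤ 0 ∧
        0 ≤ p.2 i
      else
        -rval p.1 p.2 (C.in1 i) (C.neg1 i) - rval p.1 p.2 (C.in2 i) (C.neg2 i) + p.2 i ≤ 0 ∧
        rval p.1 p.2 (C.in1 i) (C.neg1 i) - p.2 i ≤ 0 ∧
        rval p.1 p.2 (C.in2 i) (C.neg2 i) - p.2 i ≤ 0 ∧
        p.2 i ≤ 1}

def Bool.toReal (b : Bool) : ℝ := if b then 1 else 0

namespace Bool

lemma toReal_nonneg (b : Bool) : 0 ≤ b.toReal := by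
  cases b <;> norm_num [toReal]

lemma toReal_le_one (b : Bool) : b.toReal ≤ 1 := by
  cases b <;> norm_num [toReal]

lemma and_ineqs_iff (a b : Bool) (s : ℝ) :
    (a.toReal + b.toReal - s ≤ 1 ∧ -a.toReal + s ≤ 0 ∧ -b.toReal + s ≤ 0 ∧ 0 ≤ s) ↔
      s = (a && b).toReal := by
  cases a <;> cases b <;> grind [toReal]

lemma or_ineqs_iff (a b : Bool) (s : ℝ) :
    (-a.toReal - b.toReal + s ≤ 0 ∧ a.toReal - s ≤ 0 ∧ b.toReal - s ≤ 0 ∧ s ≤ 1) ↔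
      s = (a || b).toReal := by
  cases a <;> cases b <;> grind [toReal]

end Bool

section Circuit

variable {q t : ℕ}

lemma rval_toReal_of_wire {x : Fin q → Bool} {y : Fin t → Bool} {v : Fin t → ℝ}
    {r : Fin q ⊕ Fin t} (hr : ∀ j, r = Sum.inr j → v j = (y j).toReal) (neg : Bool) :
    rval (bvec x) v r neg = (lval x y r neg).toReal := by
  have hwire : Sum.elim (bvec x) v r = (Sum.elim x y r).toReal := by
    cases r with
    | inl j => rfl
    | inr j => exact hr j rfl
  cases neg <;> cases hb : Sum.elim x y r <;>
    simp [rval, lval, hwire, hb, Bool.toReal]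

def GateIneqs (C : BoolCircuit q t) (u : Fin q → ℝ) (v : Fin t → ℝ) (i : Fin t) : Prop :=
  if C.isAnd i then
    rval u v (C.in1 i) (C.neg1 i) + rval u v (C.in2 i) (C.neg2 i) - v i ≤ 1 ∧
    -rval u v (C.in1 i) (C.neg1 i) + v i ≤ 0 ∧
    -rval u v (C.in2 i) (C.neg2 i) + v i ≤ 0 ∧
    0 ≤ v i
  else
    -rval u v (C.in1 i) (C.neg1 i) - rval u v (C.in2 i) (C.neg2 i) + v i ≤ 0 ∧
    rval u v (C.in1 i) (C.neg1 i) - v i ≤ 0 ∧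
    rval u v (C.in2 i) (C.neg2 i) - v i ≤ 0 ∧
    v i ≤ 1

lemma mem_circuitPolytope_iff (C : BoolCircuit q t) (p : (Fin q → ℝ) × (Fin t → ℝ)) :
    p ∈ circuitPolytope C ↔ (∀ j, 0 ≤ p.1 j ∧ p.1 j ≤ 1) ∧ (∀ i, 0 ≤ p.2 i ∧ p.2 i ≤ 1) ∧
      ∀ i, GateIneqs C p.1 p.2 i :=
  Iff.rfl

lemma gateIneqs_iff {C : BoolCircuit q t} {x : Fin q → Bool} {y : Fin t → Bool}
    (hy : evalSpec C x y) {v : Fin t → ℝ} {i : Fin t}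
    (hprev : ∀ j < i, v j = (y j).toReal) :
    GateIneqs C (bvec x) v i ↔ v i = (y i).toReal := by
  have h1 := rval_toReal_of_wire (x := x) (hr := fun j hj => hprev j (C.acyc1 i j hj)) (C.neg1 i)
  have h2 := rval_toReal_of_wire (x := x) (hr := fun j hj => hprev j (C.acyc2 i j hj)) (C.neg2 i)
  rw [GateIneqs, h1, h2, hy i]
  cases C.isAnd i
  · exact Bool.or_ineqs_iff _ _ _
  · exact Bool.and_ineqs_iff _ _ _

end Circuit

theorem circuit_polytope_x01 {q t : ℕ} (C : BoolCircuit q t)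
    (x : Fin q → Bool) (y : Fin t → Bool) (hy : evalSpec C x y) :
    (bvec x, bvec y) ∈ circuitPolytope C ∧
    ∀ p ∈ circuitPolytope C, p.1 = bvec x → p = (bvec x, bvec y) := by
  refine ⟨?_, ?_⟩
  · refine ⟨fun j => ⟨Bool.toReal_nonneg _, Bool.toReal_le_one _⟩,
      fun i => ⟨Bool.toReal_nonneg _, Bool.toReal_le_one _⟩, fun i => ?_⟩
    exact (gateIneqs_iff hy fun _ _ => rfl).mpr rfl
  · rintro ⟨u, v⟩ hp (rfl : u = bvec x)
    have hgates := ((mem_circuitPolytope_iff C _).mp hp).2.2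
    have hv : ∀ i, v i = bvec y i := by
      intro i
      induction i using WellFoundedLT.induction with
      | ind i ih => exact (gateIneqs_iff hy ih).mp (hgates i)
    rw [funext hv]
end

section
/- Let Q ⊆ [0,1]^{q+1+r} be a polytope with the x-0/1 property whose unique extension of each x ∈ {0,1}^q has w-coordinate equal to w_x ∈ {0,1}. For x̄ ∈ {0,1}^q with m = 1ᵀx̄, c_j = 2x̄_j − 1, and 0 < d ≤ 1/2: if w_{x̄} = 1 then max{cᵀx + d·w : (x,w,s) ∈ Q} = m + d, attained uniquely at the 0/1 extension of x̄; if w_{x̄} = 0, then the maximum is strictly less than m + d. -/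
section Objective

variable {q : ℕ} (x : Fin q → Bool) {y : Fin q → ℝ}

lemma sign_mul_le_bvec (j : Fin q) {t : ℝ} (h0 : 0 ≤ t) (h1 : t ≤ 1) :
    (2 * bvec x j - 1) * t ≤ bvec x j := by
  unfold bvec
  split <;> linarith

lemma sum_sign_mul_bvec_self : ∑ j, (2 * bvec x j - 1) * bvec x j = ∑ j, bvec x j := by
  refine Finset.sum_congr rfl fun j _ => ?_
  unfold bvec
  split <;> ring

variable (hy : ∀ j, 0 ≤ y j ∧ y j ≤ 1)
include hy

lemma sum_sign_mul_le_sum_bvec : ∑ j, (2 * bvec x j - 1) * y j ≤ ∑ j, bvec x j :=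
  Finset.sum_le_sum fun j _ => sign_mul_le_bvec x j (hy j).1 (hy j).2

lemma eq_bvec_of_sum_sign_mul_eq (h : ∑ j, (2 * bvec x j - 1) * y j = ∑ j, bvec x j) :
    y = bvec x := by
  have hterm := (Finset.sum_eq_sum_iff_of_le fun j _ =>
    sign_mul_le_bvec x j (hy j).1 (hy j).2).mp h
  funext j
  have hj := hterm j (Finset.mem_univ j)
  cases hxj : x j <;> simp only [bvec, hxj, if_true, Bool.false_eq_true, if_false] at hj ⊢
    <;> linarith

lemma objective_le {d v : ℝ} (hd : 0 < d) (hv : v ≤ 1) :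
    ∑ j, (2 * bvec x j - 1) * y j + d * v ≤ ∑ j, bvec x j + d := by
  have := sum_sign_mul_le_sum_bvec x hy
  nlinarith

lemma eq_of_objective_eq {d v : ℝ} (hd : 0 < d) (hv : v ≤ 1)
    (h : ∑ j, (2 * bvec x j - 1) * y j + d * v = ∑ j, bvec x j + d) :
    y = bvec x ∧ v = 1 := by
  have hsum := sum_sign_mul_le_sum_bvec x hy
  have hv1 : v = 1 := by nlinarith
  exact ⟨eq_bvec_of_sum_sign_mul_eq x hy (by subst hv1; linarith), hv1⟩

end Objective

theorem wef_optimization_general (q r : ℕ) (Q : Set ((Fin q → ℝ) × ℝ × (Fin r → ℝ)))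
    -- Q is contained in the unit cube
    (hcube : ∀ p ∈ Q, (∀ j, 0 ≤ p.1 j ∧ p.1 j ≤ 1) ∧ (0 ≤ p.2.1 ∧ p.2.1 ≤ 1) ∧
      ∀ l, 0 ≤ p.2.2 l ∧ p.2.2 l ≤ 1)
    (w : (Fin q → Bool) → Bool)
    -- x-0/1 property: every x ∈ {0,1}^q extends uniquely to a point of Q,
    -- that point is 0/1-valued and its w-coordinate is w_x
    (h01 : ∀ x : Fin q → Bool, ∃ s : Fin r → Bool,
      (bvec x, if w x then (1 : ℝ) else 0, bvec s) ∈ Q ∧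
      ∀ p ∈ Q, p.1 = bvec x → p = (bvec x, if w x then (1 : ℝ) else 0, bvec s))
    (xbar : Fin q → Bool) (d : ℝ) (hd0 : 0 < d) :
    (w xbar = true → ∃ s : Fin r → Bool,
      (bvec xbar, (1 : ℝ), bvec s) ∈ Q ∧
      (∑ j : Fin q, (2 * bvec xbar j - 1) * bvec xbar j) + d * 1
        = (∑ j : Fin q, bvec xbar j) + d ∧
      ∀ p ∈ Q,
        (∑ j : Fin q, (2 * bvec xbar j - 1) * p.1 j) + d * p.2.1
            ≤ (∑ j : Fin q, bvec xbar j) + d ∧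
        ((∑ j : Fin q, (2 * bvec xbar j - 1) * p.1 j) + d * p.2.1
            = (∑ j : Fin q, bvec xbar j) + d → p = (bvec xbar, (1 : ℝ), bvec s))) ∧
    (w xbar = false → ∀ p ∈ Q,
      (∑ j : Fin q, (2 * bvec xbar j - 1) * p.1 j) + d * p.2.1
        < (∑ j : Fin q, bvec xbar j) + d) := by
  obtain ⟨s, hsQ, huniq⟩ := h01 xbar
  refine ⟨fun hw => ?_, fun hw p hp => ?_⟩
  · simp only [hw, if_true] at hsQ huniq
    refine ⟨s, hsQ, by rw [sum_sign_mul_bvec_self, mul_one], fun p hp => ?_⟩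
    obtain ⟨hx, hv, -⟩ := hcube p hp
    exact ⟨objective_le xbar hx hd0 hv.2,
      fun h => huniq p hp (eq_of_objective_eq xbar hx hd0 hv.2 h).1⟩
  · obtain ⟨hx, hv, -⟩ := hcube p hp
    refine (objective_le xbar hx hd0 hv.2).lt_of_ne fun h => ?_
    obtain ⟨hpx, hp1⟩ := eq_of_objective_eq xbar hx hd0 hv.2 h
    have hp0 : p.2.1 = 0 := by simp [huniq p hp hpx, hw]
    exact one_ne_zero (hp1.symm.trans hp0)

theorem wef_optimization (q r : ℕ) (Q : Set ((Fin q → ℝ) × ℝ × (Fin r → ℝ)))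
    -- Q is contained in the unit cube
    (hcube : ∀ p ∈ Q, (∀ j, 0 ≤ p.1 j ∧ p.1 j ≤ 1) ∧ (0 ≤ p.2.1 ∧ p.2.1 ≤ 1) ∧
      ∀ l, 0 ≤ p.2.2 l ∧ p.2.2 l ≤ 1)
    (w : (Fin q → Bool) → Bool)
    -- x-0/1 property: every x ∈ {0,1}^q extends uniquely to a point of Q,
    -- that point is 0/1-valued and its w-coordinate is w_x
    (h01 : ∀ x : Fin q → Bool, ∃ s : Fin r → Bool,
      (bvec x, if w x then (1 : ℝ) else 0, bvec s) ∈ Q ∧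
      ∀ p ∈ Q, p.1 = bvec x → p = (bvec x, if w x then (1 : ℝ) else 0, bvec s))
    (xbar : Fin q → Bool) (d : ℝ) (hd0 : 0 < d) (hd1 : d ≤ 1 / 2) :
    (w xbar = true → ∃ s : Fin r → Bool,
      (bvec xbar, (1 : ℝ), bvec s) ∈ Q ∧
      (∑ j : Fin q, (2 * bvec xbar j - 1) * bvec xbar j) + d * 1
        = (∑ j : Fin q, bvec xbar j) + d ∧
      ∀ p ∈ Q,
        (∑ j : Fin q, (2 * bvec xbar j - 1) * p.1 j) + d * p.2.1
            ≤ (∑ j : Fin q, bvec xbar j) + d ∧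
        ((∑ j : Fin q, (2 * bvec xbar j - 1) * p.1 j) + d * p.2.1
            = (∑ j : Fin q, bvec xbar j) + d → p = (bvec xbar, (1 : ℝ), bvec s))) ∧
    (w xbar = false → ∀ p ∈ Q,
      (∑ j : Fin q, (2 * bvec xbar j - 1) * p.1 j) + d * p.2.1
        < (∑ j : Fin q, bvec xbar j) + d) :=
  wef_optimization_general q r Q hcube w h01 xbar d hd0
end

section
/- (Sandwich Lemma) Let P_in = conv{v_1,…,v_n} ⊆ ℝ^k and P_out = {x ∈ ℝ^k : a_i^T x ≤ b_i, 1 ≤ i ≤ m} be full-dimensional polytopes with P_in ⊆ P_out, and let S be the m×n matrix with S_{ij} = b_i − a_i^T v_j. If S has a nonnegative factorization S = TU with inner dimension r (T ≥ 0 with r columns, U ≥ 0 with r rows), then there exists a polytope P with P_in ⊆ P ⊆ P_out such that P is a linear projection of a polyhedron described by m equations and r nonnegativity constraints (hence extension complexity at most r). -/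
/-!
The polyhedron `{(x, y) : A x + T y = b, y ≥ 0}` projects onto a convex set `P`. Every `y ≥ 0`
gives `T y ≥ 0`, hence `A x ≤ b` on `P`, so `P ⊆ P_out`; and the factorization `S = T U` says
that the `j`-th column of `U` is a nonnegative lift of the vertex `v_j`, so `P_in ⊆ P` by
convexity.
-/

open Matrix

theorem Matrix.mulVec_nonneg {m r : Type*} [Fintype r] {T : Matrix m r ℝ}
    (hT : ∀ i l, 0 ≤ T i l) {y : r → ℝ} (hy : 0 ≤ y) : 0 ≤ T *ᵥ y :=
  fun i => Finset.sum_nonneg fun l _ => mul_nonneg (hT i l) (hy l)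

section ProjectedPolyhedron

variable {m k r : Type*} [Fintype k] [Fintype r]
  (A : Matrix m k ℝ) (T : Matrix m r ℝ) (b : m → ℝ)

def projectedPolyhedron : Set (k → ℝ) :=
  {x | ∃ y, 0 ≤ y ∧ A *ᵥ x + T *ᵥ y = b}

theorem convex_projectedPolyhedron : Convex ℝ (projectedPolyhedron A T b) := by
  rintro x ⟨y, hy, hxy⟩ x' ⟨y', hy', hxy'⟩ s t hs ht hst
  refine ⟨s • y + t • y', add_nonneg (smul_nonneg hs hy) (smul_nonneg ht hy'), ?_⟩
  calc A *ᵥ (s • x + t • x') + T *ᵥ (s • y + t • y')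
      = s • (A *ᵥ x + T *ᵥ y) + t • (A *ᵥ x' + T *ᵥ y') := by
        simp only [mulVec_add, mulVec_smul, smul_add]
        abel
    _ = b := by rw [hxy, hxy', ← add_smul, hst, one_smul]

theorem projectedPolyhedron_subset (hT : ∀ i l, 0 ≤ T i l) :
    projectedPolyhedron A T b ⊆ {x | A *ᵥ x ≤ b} := by
  rintro x ⟨y, hy, hxy⟩
  change A *ᵥ x ≤ b
  rw [← hxy]
  exact le_add_of_nonneg_right (mulVec_nonneg hT hy)

theorem convexHull_subset_projectedPolyhedron {n : Type*} (v : n → k → ℝ) (U : Matrix r n ℝ)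
    (hU : ∀ l j, 0 ≤ U l j) (hslack : ∀ j, b - A *ᵥ v j = T *ᵥ fun l => U l j) :
    convexHull ℝ (Set.range v) ⊆ projectedPolyhedron A T b := by
  refine convexHull_min (Set.range_subset_iff.mpr fun j => ?_) (convex_projectedPolyhedron A T b)
  exact ⟨fun l => U l j, fun l => hU l j, by rw [← hslack j, add_sub_cancel]⟩

end ProjectedPolyhedron

theorem sandwich_lemma_from_factorization_general
    (k m n r : ℕ)
    (v : Fin n → (Fin k → ℝ)) (a : Fin m → (Fin k → ℝ)) (b : Fin m → ℝ)
    (T : Matrix (Fin m) (Fin r) ℝ) (U : Matrix (Fin r) (Fin n) ℝ)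
    (hT : ∀ i l, 0 ≤ T i l) (hU : ∀ l j, 0 ≤ U l j)
    -- S = TU where S_{ij} = b_i − a_iᵀ v_j is the slack matrix
    (hfact : ∀ i j, b i - (∑ l, a i l * v j l) = ∑ l, T i l * U l j) :
    ∃ P : Set (Fin k → ℝ),
      convexHull ℝ (Set.range v) ⊆ P ∧
      P ⊆ {x : Fin k → ℝ | ∀ i, (∑ j, a i j * x j) ≤ b i} ∧
      P = {x : Fin k → ℝ | ∃ y : Fin r → ℝ, (∀ l, 0 ≤ y l) ∧
            ∀ i, (∑ j, a i j * x j) + (∑ l, T i l * y l) = b i} := by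
  refine ⟨projectedPolyhedron (Matrix.of a) T b,
    convexHull_subset_projectedPolyhedron _ T b v U hU fun j => funext fun i => hfact i j,
    projectedPolyhedron_subset _ T b hT, ?_⟩
  ext x
  simp only [projectedPolyhedron, funext_iff, Pi.le_def]
  rfl

theorem sandwich_lemma_from_factorization
    (k m n r : ℕ)
    (v : Fin n → (Fin k → ℝ)) (a : Fin m → (Fin k → ℝ)) (b : Fin m → ℝ)
    -- full-dimensionality of the polytopes
    (hfullin : (interior (convexHull ℝ (Set.range v))).Nonempty)
    (hfullout : (interior {x : Fin k → ℝ | ∀ i, (∑ j, a i j * x j) ≤ b i}).Nonempty)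
    -- P_in ⊆ P_out
    (hsub : convexHull ℝ (Set.range v) ⊆ {x : Fin k → ℝ | ∀ i, (∑ j, a i j * x j) ≤ b i})
    (T : Matrix (Fin m) (Fin r) ℝ) (U : Matrix (Fin r) (Fin n) ℝ)
    (hT : ∀ i l, 0 ≤ T i l) (hU : ∀ l j, 0 ≤ U l j)
    -- S = TU where S_{ij} = b_i − a_iᵀ v_j is the slack matrix
    (hfact : ∀ i j, b i - (∑ l, a i l * v j l) = ∑ l, T i l * U l j) :
    ∃ P : Set (Fin k → ℝ),
      convexHull ℝ (Set.range v) ⊆ P ∧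
      P ⊆ {x : Fin k → ℝ | ∀ i, (∑ j, a i j * x j) ≤ b i} ∧
      P = {x : Fin k → ℝ | ∃ y : Fin r → ℝ, (∀ l, 0 ≤ y l) ∧
            ∀ i, (∑ j, a i j * x j) + (∑ l, T i l * y l) = b i} :=
  sandwich_lemma_from_factorization_general k m n r v a b T U hT hU hfact
end
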